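/- Decision soundness (T case): given a sound verifier V, if the decision judgment P ⇒ ⟨p*, q⟩ ⇓ T is derivable by the rules DEC-FALSE, DEC-PROP, DEC-U, then P ⊨ p*. -/

import Mathlib

def Asm {E : Type*} (P : Set E) (A : Set (E → Prop)) : Set E :=
  {e ∈ P | ∀ q ∈ A, q e}

/-- `P ⊨_A p`: every execution of `Asm P A` satisfies `p`. -/
def Models {E : Type*} (P : Set E) (A : Set (E → Prop)) (p : E → Prop) : Prop :=
  ∀ e ∈ Asm P A, p e

inductive Outcome | T | F | U
deriving DecidableEq

/-- The decision judgment `P ⇒ ⟨p*, q⟩ ⇓ d`, defined by rules DEC-FALSE, DEC-PROP, DEC-U. -/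
inductive Decide {E : Type*} (V : Set E → Set (E → Prop) → (E → Prop) → Outcome)
    (P : Set E) (pstar q : E → Prop) : Outcome → Prop
  | decFalse : V P {q} pstar = .F → Decide V P pstar q .F
  | decProp (d : Outcome) : V P ∅ q = .T → V P {q} pstar = d →
      (d = .T ∨ d = .U) → Decide V P pstar q d
  | decU : V P ∅ q ≠ .T → V P {q} pstar ≠ .F → Decide V P pstar q .U

theorem Models.cut {E : Type*} {P : Set E} {A : Set (E → Prop)} {p q : E → Prop}
    (hq : Models P A q) (hp : Models P (insert q A) p) : Models P A p := by
  intro e he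
  refine hp e ⟨he.1, ?_⟩
  rintro r (rfl | hr)
  exacts [hq e he, he.2 r hr]

theorem Decide.verifier_eq_T_of_T {E : Type*} {V : Set E → Set (E → Prop) → (E → Prop) → Outcome}
    {P : Set E} {pstar q : E → Prop} (h : Decide V P pstar q .T) :
    V P ∅ q = .T ∧ V P {q} pstar = .T := by
  cases h with
  | decProp _ hq hp _ => exact ⟨hq, hp⟩

theorem stmt4_general {E : Type*} (V : Set E → Set (E → Prop) → (E → Prop) → Outcome)
    (P : Set E) (pstar q : E → Prop)
    (hT : ∀ A p, V P A p = .T → Models P A p)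
    (h : Decide V P pstar q .T) : Models P ∅ pstar := by
  obtain ⟨hq, hp⟩ := h.verifier_eq_T_of_T
  exact (hT _ _ hq).cut (by simpa using hT _ _ hp)

/-- Decision soundness (T case): a derivable outcome T means P ⊨ p*. -/
theorem stmt4 {E : Type*} (V : Set E → Set (E → Prop) → (E → Prop) → Outcome)
    (P : Set E) (pstar q : E → Prop)
    (hT : ∀ A p, V P A p = .T → Models P A p)
    (hF : ∀ A p, V P A p = .F → ¬ Models P A p)
    (h : Decide V P pstar q .T) : Models P ∅ pstar :=
  stmt4_general V P pstar q hT h
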